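/- Fix integers d ≥ 1 and ℓ ≥ 1, let U₁, …, U_M be the points of the ℓ-th principal lattice P_ℓ of the simplex Δ_d with M = binom(ℓ+d, d), and let σ₀ = min_{|u|₂ = 1} |𝒱u|₂ be the minimum singular value of the Vandermonde-type matrix 𝒱. Let η ≥ 0, and let g and ĝ be polynomials in d variables of total degree at most ℓ. If |g(U_i) − ĝ(U_i)| ≤ η for every 1 ≤ i ≤ M, then sup_{x ∈ [0,1]^d} |g(x) − ĝ(x)| ≤ M · η / σ₀. -/

import Mathlib

open MeasureTheory Finset
open scoped ENNReal

noncomputable section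

/-- The largest integer strictly less than `β` (for `β > 0`). -/
def lflr (β : ℝ) : ℕ := ⌈β⌉₊ - 1

/-- The Euclidean (`ℓ²`) norm on `Fin d → ℝ`. -/
noncomputable def l2norm {d : ℕ} (x : Fin d → ℝ) : ℝ := Real.sqrt (∑ i, x i ^ 2)

/-- Partial derivative in coordinate `i`. -/
noncomputable def pder {d : ℕ} (i : Fin d) (f : (Fin d → ℝ) → ℝ) : (Fin d → ℝ) → ℝ :=
  fun x => fderiv ℝ f x (Pi.single i 1)

/-- The multi-index partial differential operator `D^s`. -/
noncomputable def mderiv {d : ℕ} (s : Fin d → ℕ) (f : (Fin d → ℝ) → ℝ) : (Fin d → ℝ) → ℝ :=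
  (List.finRange d).foldr (fun i g => (pder i)^[s i] g) f

/-- The Hölder class `H(β, L)`: functions supported on the unit cube, `⌊β⌋` times
differentiable, whose top-order partial derivatives are `(β - ⌊β⌋)`-Hölder with
constant `L` (w.r.t. the Euclidean norm). -/
def HolderClass (d : ℕ) (β L : ℝ) (f : (Fin d → ℝ) → ℝ) : Prop :=
  (∀ x, x ∉ Set.Icc (0 : Fin d → ℝ) 1 → f x = 0) ∧
  ContDiff ℝ (lflr β : ℕ) f ∧
  ∀ s : Fin d → ℕ, (∑ i, s i) = lflr β → ∀ x y : Fin d → ℝ,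
    |mderiv s f x - mderiv s f y| ≤ L * l2norm (x - y) ^ (β - (lflr β : ℝ))

/-- Barycentric coordinates with respect to the simplex `Δ_d` with vertices
`0, e_1, …, e_d`. -/
def lam {d : ℕ} (t : Fin (d + 1)) (x : Fin d → ℝ) : ℝ :=
  if h : t = 0 then 1 - ∑ i, x i else x (t.pred h)

/-- The `ℓ`-th principal lattice of the simplex `Δ_d`: points of the simplex all of
whose barycentric coordinates are nonnegative integer multiples of `1/ℓ`. -/
def principalLattice (d ℓ : ℕ) : Set (Fin d → ℝ) :=
  {x | ∀ t : Fin (d + 1), 0 ≤ lam t x ∧ ∃ r : ℕ, (ℓ : ℝ) * lam t x = r}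

/-- The Lagrange basis polynomial `p` associated with a point `u` of the `ℓ`-th
principal lattice:  `p(x) = ∏_{t : λ_t(u) > 0} ∏_{r=0}^{ℓλ_t(u)-1}
(λ_t(x) - r/ℓ)/(λ_t(u) - r/ℓ)`. -/
noncomputable def lagBasis (d ℓ : ℕ) (u x : Fin d → ℝ) : ℝ :=
  ∏ t : Fin (d + 1), ∏ r ∈ Finset.range ⌊(ℓ : ℝ) * lam t u⌋₊,
    (lam t x - r / ℓ) / (lam t u - r / ℓ)

end

/-!
Write `P = g - ĝ = ∑_α c_α x^α`. The matrix `𝒱` sends the coefficient vector `c` to the values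
of `P` on the lattice, each bounded by `η`, so `σ₀ |c|₂ ≤ |𝒱 c|₂ ≤ √M η`. On the unit cube every
monomial is bounded by `1`, hence `|P(x)| ≤ ∑ |c_α| ≤ √M |c|₂ ≤ M η / σ₀`.
That `σ₀ > 0` comes from the invertibility of `𝒱`: the Lagrange polynomials of the principal
lattice have degree `ℓ` and are dual to the lattice points, so their coefficient vectors form
a right inverse of `𝒱`.
-/

open MvPolynomial
open scoped Matrix

section L2Norm

variable {n : ℕ}

lemma l2norm_eq_norm (x : Fin n → ℝ) :
    l2norm x = ‖(WithLp.toLp 2 x : EuclideanSpace ℝ (Fin n))‖ := by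
  simp [l2norm, EuclideanSpace.norm_eq, sq_abs]

lemma l2norm_nonneg (x : Fin n → ℝ) : 0 ≤ l2norm x := by
  rw [l2norm_eq_norm]
  exact norm_nonneg _

@[simp]
lemma l2norm_eq_zero {x : Fin n → ℝ} : l2norm x = 0 ↔ x = 0 := by
  simp [l2norm_eq_norm]

@[simp]
lemma l2norm_zero : l2norm (0 : Fin n → ℝ) = 0 :=
  l2norm_eq_zero.mpr rfl

lemma l2norm_smul (a : ℝ) (x : Fin n → ℝ) : l2norm (a • x) = |a| * l2norm x := by
  simp [l2norm_eq_norm, WithLp.toLp_smul, norm_smul]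

lemma l2norm_le_sqrt_card_mul {x : Fin n → ℝ} {η : ℝ} (hη : 0 ≤ η) (hx : ∀ i, |x i| ≤ η) :
    l2norm x ≤ √n * η := by
  have hsq : ∑ i, x i ^ 2 ≤ n * η ^ 2 := by
    calc ∑ i, x i ^ 2 ≤ ∑ _i : Fin n, η ^ 2 :=
          sum_le_sum fun i _ => sq_le_sq' (abs_le.mp (hx i)).1 (abs_le.mp (hx i)).2
      _ = n * η ^ 2 := by simp
  calc l2norm x ≤ √(n * η ^ 2) := Real.sqrt_le_sqrt hsq
    _ = √n * η := by rw [Real.sqrt_mul (Nat.cast_nonneg n), Real.sqrt_sq hη]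

lemma sum_abs_le_sqrt_card_mul_l2norm (x : Fin n → ℝ) : ∑ i, |x i| ≤ √n * l2norm x := by
  have hsq : (∑ i, |x i|) ^ 2 ≤ n * ∑ i, x i ^ 2 := by
    simpa [sq_abs] using sq_sum_le_card_mul_sum_sq (s := univ) (f := fun i => |x i|)
  rw [l2norm, ← Real.sqrt_mul (Nat.cast_nonneg n)]
  exact Real.le_sqrt_of_sq_le hsq

end L2Norm

section MinSingularValue

variable {m n : ℕ}

def IsMinSingularValue (A : Matrix (Fin m) (Fin n) ℝ) (σ : ℝ) : Prop :=
  IsLeast {r : ℝ | ∃ u : Fin n → ℝ, l2norm u = 1 ∧ r = l2norm (A *ᵥ u)} σ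

variable {A : Matrix (Fin m) (Fin n) ℝ} {σ : ℝ}

lemma IsMinSingularValue.mul_l2norm_le (hσ : IsMinSingularValue A σ) (c : Fin n → ℝ) :
    σ * l2norm c ≤ l2norm (A *ᵥ c) := by
  rcases eq_or_ne c 0 with rfl | hc
  · simp
  have hpos : 0 < l2norm c := (l2norm_nonneg c).lt_of_ne' (l2norm_eq_zero.not.mpr hc)
  have hunit : l2norm ((l2norm c)⁻¹ • c) = 1 := by
    rw [l2norm_smul, abs_of_pos (inv_pos.mpr hpos), inv_mul_cancel₀ hpos.ne']
  have hle := hσ.2 ⟨_, hunit, rfl⟩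
  rw [Matrix.mulVec_smul, l2norm_smul, abs_of_pos (inv_pos.mpr hpos)] at hle
  rwa [← le_div_iff₀ hpos, div_eq_inv_mul]

lemma IsMinSingularValue.pos (hσ : IsMinSingularValue A σ) (hA : Function.Injective A.mulVec) :
    0 < σ := by
  obtain ⟨⟨u, hu, rfl⟩, -⟩ := hσ
  refine (l2norm_nonneg _).lt_of_ne' fun h => ?_
  have hu0 : u = 0 := hA (by rw [l2norm_eq_zero.mp h, Matrix.mulVec_zero])
  simp [hu0] at hu

end MinSingularValue

section Monomials

variable {d ℓ : ℕ} {ι κ : Type*}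

def mvVandermonde (U : κ → Fin d → ℝ) (α : ι → Fin d → ℕ) : Matrix κ ι ℝ :=
  Matrix.of fun k j => ∏ i, U k i ^ α j i

noncomputable def coeffVec (α : ι → Fin d → ℕ) (P : MvPolynomial (Fin d) ℝ) : ι → ℝ :=
  fun j => P.coeff (Finsupp.equivFunOnFinite.symm (α j))

variable [Fintype ι] {α : ι → Fin d → ℕ} {P : MvPolynomial (Fin d) ℝ}

lemma sum_coeffVec_mul_eq_eval (hαinj : Function.Injective α)
    (hα : {s : Fin d → ℕ | ∑ i, s i ≤ ℓ} ⊆ Set.range α) (hP : P.totalDegree ≤ ℓ)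
    (x : Fin d → ℝ) :
    ∑ j, coeffVec α P j * ∏ i, x i ^ α j i = eval x P := by
  set e : ι → (Fin d →₀ ℕ) := fun j => Finsupp.equivFunOnFinite.symm (α j)
  have he : Set.InjOn e (univ : Finset ι) :=
    (Finsupp.equivFunOnFinite.symm.injective.comp hαinj).injOn
  have hsupp : P.support ⊆ univ.image e := by
    intro s hs
    have hdeg : ∑ i, s i ≤ ℓ := by
      simpa [Finsupp.sum_fintype] using (le_totalDegree hs).trans hP
    obtain ⟨j, hj⟩ := hα hdeg
    exact mem_image.mpr ⟨j, mem_univ j, by simp [e, hj]⟩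
  rw [eval_eq' x P, sum_subset hsupp fun s _ hs => by simp [notMem_support_iff.mp hs],
    sum_image he]
  rfl

lemma mvVandermonde_mulVec_coeffVec (U : κ → Fin d → ℝ) (hαinj : Function.Injective α)
    (hα : {s : Fin d → ℕ | ∑ i, s i ≤ ℓ} ⊆ Set.range α) (hP : P.totalDegree ≤ ℓ) :
    mvVandermonde U α *ᵥ coeffVec α P = fun k => eval (U k) P := by
  funext k
  rw [← sum_coeffVec_mul_eq_eval hαinj hα hP]
  simp [mvVandermonde, Matrix.mulVec, dotProduct, mul_comm]

lemma abs_eval_le_sum_abs_coeffVec (hαinj : Function.Injective α)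
    (hα : {s : Fin d → ℕ | ∑ i, s i ≤ ℓ} ⊆ Set.range α) (hP : P.totalDegree ≤ ℓ)
    {x : Fin d → ℝ} (hx : x ∈ Set.Icc 0 1) :
    |eval x P| ≤ ∑ j, |coeffVec α P j| := by
  have hmono : ∀ j, |∏ i, x i ^ α j i| ≤ 1 := fun j => by
    rw [abs_prod]
    exact prod_le_one (fun i _ => abs_nonneg _) fun i _ => by
      rw [abs_pow, abs_of_nonneg (hx.1 i)]
      exact pow_le_one₀ (hx.1 i) (hx.2 i)
  rw [← sum_coeffVec_mul_eq_eval hαinj hα hP]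
  refine (abs_sum_le_sum_abs _ _).trans (sum_le_sum fun j _ => ?_)
  rw [abs_mul]
  exact mul_le_of_le_one_right (abs_nonneg _) (hmono j)

end Monomials

section PrincipalLattice

variable {d ℓ : ℕ}

lemma sum_lam (x : Fin d → ℝ) : ∑ t, lam t x = 1 := by
  simp [Fin.sum_univ_succ, lam, Fin.succ_ne_zero]

lemma natFloor_mul_lam {u : Fin d → ℝ} (hu : u ∈ principalLattice d ℓ) (t : Fin (d + 1)) :
    (⌊(ℓ : ℝ) * lam t u⌋₊ : ℝ) = ℓ * lam t u := by
  obtain ⟨-, r, hr⟩ := hu t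
  rw [hr, Nat.floor_natCast]

lemma sum_natFloor_mul_lam {u : Fin d → ℝ} (hu : u ∈ principalLattice d ℓ) :
    ∑ t, ⌊(ℓ : ℝ) * lam t u⌋₊ = ℓ := by
  have : ((∑ t, ⌊(ℓ : ℝ) * lam t u⌋₊ : ℕ) : ℝ) = ℓ := by
    push_cast
    rw [sum_congr rfl fun t _ => natFloor_mul_lam hu t, ← mul_sum, sum_lam, mul_one]
  exact_mod_cast this

lemma exists_natFloor_mul_lam_lt (hℓ : 1 ≤ ℓ) {u v : Fin d → ℝ}
    (hu : u ∈ principalLattice d ℓ) (hv : v ∈ principalLattice d ℓ) (hne : v ≠ u) :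
    ∃ t, ⌊(ℓ : ℝ) * lam t v⌋₊ < ⌊(ℓ : ℝ) * lam t u⌋₊ := by
  by_contra! hle
  have heq := (sum_eq_sum_iff_of_le fun t _ => hle t).mp
    (by rw [sum_natFloor_mul_lam hu, sum_natFloor_mul_lam hv])
  refine hne (funext fun i => ?_)
  have h := congrArg (fun n : ℕ => (n : ℝ)) (heq i.succ (mem_univ _))
  simp only [natFloor_mul_lam hu, natFloor_mul_lam hv] at h
  have hℓ0 : (ℓ : ℝ) ≠ 0 := by positivity
  simpa [lam, Fin.succ_ne_zero] using (mul_left_cancel₀ hℓ0 h).symm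

lemma lagBasis_self (hℓ : 1 ≤ ℓ) {u : Fin d → ℝ} (hu : u ∈ principalLattice d ℓ) :
    lagBasis d ℓ u u = 1 := by
  refine prod_eq_one fun t _ => prod_eq_one fun r hr => div_self ?_
  have hr' : (r : ℝ) < ℓ * lam t u := by
    rw [← natFloor_mul_lam hu t]
    exact_mod_cast mem_range.mp hr
  have : (r : ℝ) / ℓ < lam t u := (div_lt_iff₀' (by positivity)).mpr hr'
  linarith

lemma lagBasis_eq_zero_of_ne (hℓ : 1 ≤ ℓ) {u v : Fin d → ℝ}
    (hu : u ∈ principalLattice d ℓ) (hv : v ∈ principalLattice d ℓ) (hne : v ≠ u) :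
    lagBasis d ℓ u v = 0 := by
  obtain ⟨t, ht⟩ := exists_natFloor_mul_lam_lt hℓ hu hv hne
  refine prod_eq_zero (mem_univ t) (prod_eq_zero (mem_range.mpr ht) ?_)
  have hℓ0 : (ℓ : ℝ) ≠ 0 := by positivity
  rw [natFloor_mul_lam hv t, mul_div_cancel_left₀ _ hℓ0, sub_self, zero_div]

end PrincipalLattice

section LagrangePolynomial

variable {d : ℕ}

noncomputable def lamPoly (t : Fin (d + 1)) : MvPolynomial (Fin d) ℝ :=
  if h : t = 0 then 1 - ∑ i, X i else X (t.pred h)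

lemma eval_lamPoly (t : Fin (d + 1)) (x : Fin d → ℝ) : eval x (lamPoly t) = lam t x := by
  unfold lamPoly lam
  split <;> simp

lemma totalDegree_lamPoly (t : Fin (d + 1)) : (lamPoly t).totalDegree ≤ 1 := by
  unfold lamPoly
  split
  · refine (totalDegree_sub _ _).trans (max_le (by simp) ?_)
    exact (totalDegree_finsetSum _ _).trans (Finset.sup_le fun i _ => by simp)
  · simp

noncomputable def lagPoly (ℓ : ℕ) (u : Fin d → ℝ) : MvPolynomial (Fin d) ℝ :=
  ∏ t : Fin (d + 1), ∏ r ∈ range ⌊(ℓ : ℝ) * lam t u⌋₊,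
    C (lam t u - (r : ℝ) / ℓ)⁻¹ * (lamPoly t - C ((r : ℝ) / ℓ))

lemma eval_lagPoly (ℓ : ℕ) (u x : Fin d → ℝ) : eval x (lagPoly ℓ u) = lagBasis d ℓ u x := by
  simp only [lagPoly, lagBasis, map_prod, map_mul, map_sub, eval_C, eval_lamPoly]
  simp [div_eq_inv_mul, mul_comm]

lemma totalDegree_lagPoly {ℓ : ℕ} {u : Fin d → ℝ} (hu : u ∈ principalLattice d ℓ) :
    (lagPoly ℓ u).totalDegree ≤ ℓ := by
  have hlin : ∀ (t : Fin (d + 1)) (a b : ℝ), (C a * (lamPoly t - C b)).totalDegree ≤ 1 :=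
    fun t a b => (totalDegree_mul _ _).trans <| by
      rw [totalDegree_C, zero_add]
      exact (totalDegree_sub _ _).trans (max_le (totalDegree_lamPoly t) (by simp))
  calc (lagPoly ℓ u).totalDegree
      ≤ ∑ t, ∑ r ∈ range ⌊(ℓ : ℝ) * lam t u⌋₊, 1 :=
        (totalDegree_finsetProd _ _).trans <| sum_le_sum fun t _ =>
          (totalDegree_finsetProd _ _).trans <| sum_le_sum fun r _ => hlin t _ _
    _ = ℓ := by simp [sum_natFloor_mul_lam hu]

end LagrangePolynomial

lemma mvVandermonde_mulVec_injective {d ℓ M : ℕ} (hℓ : 1 ≤ ℓ) {U : Fin M → Fin d → ℝ}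
    (hUinj : Function.Injective U) (hU : ∀ k, U k ∈ principalLattice d ℓ)
    {α : Fin M → Fin d → ℕ} (hαinj : Function.Injective α)
    (hα : {s : Fin d → ℕ | ∑ i, s i ≤ ℓ} ⊆ Set.range α) :
    Function.Injective (mvVandermonde U α).mulVec := by
  set B : Matrix (Fin M) (Fin M) ℝ := Matrix.of fun j k => coeffVec α (lagPoly ℓ (U k)) j
  have hcol : ∀ k, mvVandermonde U α *ᵥ (fun j => B j k) = Pi.single k 1 := fun k => by
    rw [show (fun j => B j k) = coeffVec α (lagPoly ℓ (U k)) from rfl,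
      mvVandermonde_mulVec_coeffVec U hαinj hα (totalDegree_lagPoly (hU k))]
    funext k'
    rw [eval_lagPoly, Pi.single_apply]
    split_ifs with h
    · rw [h, lagBasis_self hℓ (hU k)]
    · exact lagBasis_eq_zero_of_ne hℓ (hU k) (hU k') (hUinj.ne h)
  have hAB : mvVandermonde U α * B = 1 := by
    ext k' k
    simpa [Matrix.mulVec, dotProduct, Matrix.mul_apply, Pi.single_apply, Matrix.one_apply,
      eq_comm] using congrFun (hcol k) k'
  exact Matrix.mulVec_injective_iff_isUnit.mpr (IsUnit.of_mul_eq_one _ hAB)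

theorem stmt7_general (d ℓ : ℕ) (hℓ : 1 ≤ ℓ)
    (M : ℕ)
    (U : Fin M → (Fin d → ℝ)) (hUinj : Function.Injective U)
    (hUrange : Set.range U = principalLattice d ℓ)
    (α : Fin M → (Fin d → ℕ)) (hαinj : Function.Injective α)
    (hαrange : Set.range α = {s : Fin d → ℕ | ∑ i, s i ≤ ℓ})
    (V : Matrix (Fin M) (Fin M) ℝ)
    (hV : V = Matrix.of fun k j : Fin M => ∏ i, U k i ^ α j i)
    (σ₀ : ℝ)
    (hσ : IsLeast {r : ℝ | ∃ u : Fin M → ℝ, l2norm u = 1 ∧ r = l2norm (V.mulVec u)} σ₀)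
    (η : ℝ) (hη : 0 ≤ η)
    (g ghat : MvPolynomial (Fin d) ℝ)
    (hg : g.totalDegree ≤ ℓ) (hghat : ghat.totalDegree ≤ ℓ)
    (hclose : ∀ k : Fin M,
      |MvPolynomial.eval (U k) g - MvPolynomial.eval (U k) ghat| ≤ η) :
    ∀ x ∈ Set.Icc (0 : Fin d → ℝ) 1,
      |MvPolynomial.eval x g - MvPolynomial.eval x ghat| ≤ M * η / σ₀ := by
  intro x hx
  subst hV
  have hα := hαrange.ge
  have hU : ∀ k, U k ∈ principalLattice d ℓ := fun k => hUrange ▸ Set.mem_range_self k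
  change IsMinSingularValue (mvVandermonde U α) σ₀ at hσ
  have hσpos : 0 < σ₀ := hσ.pos (mvVandermonde_mulVec_injective hℓ hUinj hU hαinj hα)
  have hP : (g - ghat).totalDegree ≤ ℓ := (totalDegree_sub g ghat).trans (max_le hg hghat)
  set c := coeffVec α (g - ghat)
  have hvalues : l2norm (mvVandermonde U α *ᵥ c) ≤ √M * η := by
    rw [mvVandermonde_mulVec_coeffVec U hαinj hα hP]
    exact l2norm_le_sqrt_card_mul hη fun k => by simpa using hclose k
  have hc : l2norm c ≤ √M * η / σ₀ := by
    rw [le_div_iff₀ hσpos, mul_comm]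
    exact (hσ.mul_l2norm_le c).trans hvalues
  calc |eval x g - eval x ghat| = |eval x (g - ghat)| := by rw [map_sub]
    _ ≤ ∑ j, |c j| := abs_eval_le_sum_abs_coeffVec hαinj hα hP hx
    _ ≤ √M * l2norm c := sum_abs_le_sqrt_card_mul_l2norm c
    _ ≤ √M * (√M * η / σ₀) := mul_le_mul_of_nonneg_left hc (Real.sqrt_nonneg _)
    _ = M * η / σ₀ := by rw [← mul_div_assoc, ← mul_assoc, Real.mul_self_sqrt (Nat.cast_nonneg M)]

/-- If two polynomials of total degree at most `ℓ` differ by at most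
`η` at all points of the `ℓ`-th principal lattice, then they differ by at most
`M η / σ₀` uniformly on the unit cube, where `σ₀` is the minimum singular value of
the Vandermonde-type matrix `𝒱`. -/
theorem stmt7 (d ℓ : ℕ) (hd : 1 ≤ d) (hℓ : 1 ≤ ℓ)
    (M : ℕ) (hM : M = Nat.choose (ℓ + d) d)
    (U : Fin M → (Fin d → ℝ)) (hUinj : Function.Injective U)
    (hUrange : Set.range U = principalLattice d ℓ)
    (α : Fin M → (Fin d → ℕ)) (hαinj : Function.Injective α)
    (hαrange : Set.range α = {s : Fin d → ℕ | ∑ i, s i ≤ ℓ})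
    (V : Matrix (Fin M) (Fin M) ℝ)
    (hV : V = Matrix.of fun k j : Fin M => ∏ i, U k i ^ α j i)
    (σ₀ : ℝ)
    (hσ : IsLeast {r : ℝ | ∃ u : Fin M → ℝ, l2norm u = 1 ∧ r = l2norm (V.mulVec u)} σ₀)
    (η : ℝ) (hη : 0 ≤ η)
    (g ghat : MvPolynomial (Fin d) ℝ)
    (hg : g.totalDegree ≤ ℓ) (hghat : ghat.totalDegree ≤ ℓ)
    (hclose : ∀ k : Fin M,
      |MvPolynomial.eval (U k) g - MvPolynomial.eval (U k) ghat| ≤ η) :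
    ∀ x ∈ Set.Icc (0 : Fin d → ℝ) 1,
      |MvPolynomial.eval x g - MvPolynomial.eval x ghat| ≤ M * η / σ₀ :=
  stmt7_general d ℓ hℓ M U hUinj hUrange α hαinj hαrange V hV σ₀ hσ η hη g ghat hg hghat hclose
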